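/- Let V and W be modules with Leibniz operators. The assignment q(v ⊗ w) := v ⊗_A w + (λ/2) ω^{ij} ∇_{V,i}(v) ⊗_A ∇_{W,j}(w) (for v ∈ V, w ∈ W, extended λ-bilinearly) is A₁-balanced, i.e. q(v • a ⊗ w) = q(v ⊗ a • w) for all a ∈ A₁, and hence induces a well-defined map q_{V,W} : V₁ ⊗_{A₁} W₁ → (V ⊗_A W)₁. Moreover q_{V,W} is an A₁-bimodule map, where V ⊗_A W carries the Leibniz operators ∇_j := ∇_{V,j} ⊗ id + id ⊗ ∇_{W,j}; and for a third module with Leibniz operators Z the coherence identity q_{V⊗W,Z} ∘ (q_{V,W} ⊗ id) = q_{V,W⊗Z} ∘ (id ⊗ q_{W,Z}) holds as maps V₁ ⊗_{A₁} W₁ ⊗_{A₁} Z₁ → (V ⊗_A W ⊗_A Z)₁. -/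

import Mathlib

open scoped TensorProduct

namespace Stmt4

/-- The semiclassical data: derivations `δ_i` and an antisymmetric `ω^{ij}` with
entries in a commutative algebra `A` over a field `K` of characteristic zero. -/
structure DefData (K A : Type) [Field K] [CharZero K] [CommRing A] [Algebra K A]
    (n : ℕ) where
  δ : Fin n → A → A
  ω : Fin n → Fin n → A
  δ_add : ∀ i a b, δ i (a + b) = δ i a + δ i b
  δ_leibniz : ∀ i a b, δ i (a * b) = a * δ i b + b * δ i a
  ω_anti : ∀ i j, ω i j = - ω j i

variable {K A : Type} [Field K] [CharZero K] [CommRing A] [Algebra K A] {n : ℕ}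

/-- The scalar `1/2` in `A`. -/
noncomputable def half (K A : Type) [Field K] [CharZero K] [CommRing A] [Algebra K A] : A :=
  algebraMap K A (2⁻¹ : K)

/-- The deformed product on `A₁ = A ⊕ λA` (a pair `(a₀, a₁)` stands for `a₀ + λ a₁`,
with `λ² = 0`):  `a • b = ab + (λ/2) ω^{ij} δ_i(a) δ_j(b)`, extended `λ`-bilinearly. -/
noncomputable def mul1 (D : DefData K A n) (a b : A × A) : A × A :=
  (a.1 * b.1,
   a.1 * b.2 + a.2 * b.1 + half K A * ∑ i, ∑ j, D.ω i j * D.δ i a.1 * D.δ j b.1)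

/-- A module with Leibniz operators: an `A`-module `E` with additive maps `∇_{E,j}`
satisfying `∇_{E,j}(a e) = a ∇_{E,j} e + δ_j(a) e`. -/
structure LeibMod (D : DefData K A n) (E : Type) [AddCommGroup E] [Module A E] where
  nab : Fin n → E → E
  nab_add : ∀ j e f, nab j (e + f) = nab j e + nab j f
  nab_smul : ∀ j a e, nab j (a • e) = a • nab j e + D.δ j a • e

variable {D : DefData K A n} {E : Type} [AddCommGroup E] [Module A E]

/-- Deformed left action of `A₁` on `E₁ = E ⊕ λE`:
`a • e = a e + (λ/2) ω^{ij} δ_i(a) ∇_{E,j}(e)`, extended `λ`-bilinearly. -/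
noncomputable def lact (L : LeibMod D E) (a : A × A) (e : E × E) : E × E :=
  (a.1 • e.1,
   a.1 • e.2 + a.2 • e.1 + ∑ i, ∑ j, (half K A * D.ω i j * D.δ i a.1) • L.nab j e.1)

/-- Deformed right action of `A₁` on `E₁ = E ⊕ λE`:
`e • a = a e − (λ/2) ω^{ij} δ_i(a) ∇_{E,j}(e)`, extended `λ`-bilinearly. -/
noncomputable def ract (L : LeibMod D E) (e : E × E) (a : A × A) : E × E :=
  (a.1 • e.1,
   a.1 • e.2 + a.2 • e.1 - ∑ i, ∑ j, (half K A * D.ω i j * D.δ i a.1) • L.nab j e.1)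

variable {W : Type} [AddCommGroup W] [Module A W]

/-- The natural transformation `q_{V,W}` in the pair representation:
`q(v ⊗ w) = v ⊗_A w + (λ/2) ω^{ij} ∇_{V,i}(v) ⊗_A ∇_{W,j}(w)`, extended `λ`-bilinearly. -/
noncomputable def qpair (LV : LeibMod D E) (LW : LeibMod D W)
    (v : E × E) (w : W × W) : (E ⊗[A] W) × (E ⊗[A] W) :=
  (v.1 ⊗ₜ[A] w.1,
   v.1 ⊗ₜ[A] w.2 + v.2 ⊗ₜ[A] w.1 +
     ∑ i, ∑ j, (half K A * D.ω i j) • (LV.nab i v.1 ⊗ₜ[A] LW.nab j w.1))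

/-!
All identities live in the `λ`-component. Write `{a, v} = (1/2) ω^{ij} δ_i(a) ∇_j(v)` for the
first-order part of the actions and `B(v, w) = (1/2) ω^{ij} ∇_i(v) ⊗ ∇_j(w)` for that of `q`.
The Leibniz rule gives `B(a v, w) = a B(v, w) + v ⊗ {a, w}` and, after exchanging `i` and `j`
with the antisymmetry of `ω`, `B(v, a w) = a B(v, w) - {a, v} ⊗ w`; these two correction terms
are exactly what the deformed actions on `V₁` and `W₁` contribute, which gives balancedness.
On `V ⊗ W` the bracket `{a, -}` is a derivation of `⊗`, which gives the bimodule property.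
For coherence, both `B(v ⊗ w, z) + B(v, w) ⊗ z` and `B(v, w ⊗ z) + v ⊗ B(w, z)` are the sum of
the three contractions of `ω` against `∇v ⊗ ∇w ⊗ z`, `∇v ⊗ w ⊗ ∇z` and `v ⊗ ∇w ⊗ ∇z`.
-/

theorem sum_sum_smul_antisymm {ι R M : Type*} [Fintype ι] [CommRing R] [AddCommGroup M]
    [Module R M] {ω : ι → ι → R} (hω : ∀ i j, ω i j = -ω j i) (c : R) (d : ι → R) (g : ι → M) :
    ∑ i, ∑ j, (c * ω i j * d j) • g i = -∑ i, ∑ j, (c * ω i j * d i) • g j := by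
  rw [Finset.sum_comm, ← Finset.sum_neg_distrib]
  refine Finset.sum_congr rfl fun i _ => ?_
  rw [← Finset.sum_neg_distrib]
  refine Finset.sum_congr rfl fun j _ => ?_
  rw [hω j i, ← neg_smul]
  ring_nf

section Bracket

variable {V Z : Type} [AddCommGroup V] [Module A V] [AddCommGroup Z] [Module A Z]
  (LV : LeibMod D V) (LW : LeibMod D W) (LZ : LeibMod D Z)

noncomputable def bracket (a : A) (v : V) : V :=
  ∑ i, ∑ j, (half K A * D.ω i j * D.δ i a) • LV.nab j v

noncomputable def tmulBracket (v : V) (w : W) : V ⊗[A] W :=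
  ∑ i, ∑ j, (half K A * D.ω i j) • (LV.nab i v ⊗ₜ[A] LW.nab j w)

theorem lact_eq (a : A × A) (v : V × V) :
    lact LV a v = (a.1 • v.1, a.1 • v.2 + a.2 • v.1 + bracket LV a.1 v.1) := rfl

theorem ract_eq (v : V × V) (a : A × A) :
    ract LV v a = (a.1 • v.1, a.1 • v.2 + a.2 • v.1 - bracket LV a.1 v.1) := rfl

theorem qpair_eq (v : V × V) (w : W × W) :
    qpair LV LW v w =
      (v.1 ⊗ₜ[A] w.1, v.1 ⊗ₜ[A] w.2 + v.2 ⊗ₜ[A] w.1 + tmulBracket LV LW v.1 w.1) := rfl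

theorem tmulBracket_smul_left (a : A) (v : V) (w : W) :
    tmulBracket LV LW (a • v) w = a • tmulBracket LV LW v w + v ⊗ₜ[A] bracket LW a w := by
  simp only [tmulBracket, bracket, LV.nab_smul, TensorProduct.add_tmul, TensorProduct.tmul_sum,
    TensorProduct.tmul_smul, ← TensorProduct.smul_tmul', smul_add, Finset.sum_add_distrib,
    Finset.smul_sum, smul_smul, mul_comm a, mul_assoc]

theorem tmulBracket_smul_right (a : A) (v : V) (w : W) :
    tmulBracket LV LW v (a • w) = a • tmulBracket LV LW v w - bracket LV a v ⊗ₜ[A] w := by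
  have hswap := sum_sum_smul_antisymm D.ω_anti (half K A) (D.δ · a) (LV.nab · v ⊗ₜ[A] w)
  simp only [tmulBracket, bracket, LW.nab_smul, TensorProduct.tmul_add, TensorProduct.sum_tmul,
    TensorProduct.tmul_smul, ← TensorProduct.smul_tmul', smul_add, Finset.sum_add_distrib,
    Finset.smul_sum, smul_smul, mul_comm a] at hswap ⊢
  rw [hswap, sub_eq_add_neg]

theorem qpair_ract_eq_qpair_lact (a : A × A) (v : V × V) (w : W × W) :
    qpair LV LW (ract LV v a) w = qpair LV LW v (lact LW a w) := by
  simp only [qpair_eq, ract_eq, lact_eq, tmulBracket_smul_left, tmulBracket_smul_right,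
    ← TensorProduct.smul_tmul', TensorProduct.tmul_smul, TensorProduct.add_tmul,
    TensorProduct.sub_tmul, TensorProduct.tmul_add]
  congr 1
  abel

variable {LV LW LZ}

theorem bracket_tmul {LVW : LeibMod D (V ⊗[A] W)}
    (hLVW : ∀ j v w, LVW.nab j (v ⊗ₜ[A] w) = LV.nab j v ⊗ₜ[A] w + v ⊗ₜ[A] LW.nab j w)
    (a : A) (v : V) (w : W) :
    bracket LVW a (v ⊗ₜ[A] w) = bracket LV a v ⊗ₜ[A] w + v ⊗ₜ[A] bracket LW a w := by
  simp only [bracket, hLVW, smul_add, Finset.sum_add_distrib, TensorProduct.sum_tmul,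
    TensorProduct.tmul_sum, TensorProduct.smul_tmul', TensorProduct.tmul_smul]

theorem qpair_lact {LVW : LeibMod D (V ⊗[A] W)}
    (hLVW : ∀ j v w, LVW.nab j (v ⊗ₜ[A] w) = LV.nab j v ⊗ₜ[A] w + v ⊗ₜ[A] LW.nab j w)
    (a : A × A) (v : V × V) (w : W × W) :
    qpair LV LW (lact LV a v) w = lact LVW a (qpair LV LW v w) := by
  simp only [qpair_eq, lact_eq, bracket_tmul hLVW, tmulBracket_smul_left,
    ← TensorProduct.smul_tmul', TensorProduct.add_tmul, smul_add]
  congr 1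
  abel

theorem qpair_ract {LVW : LeibMod D (V ⊗[A] W)}
    (hLVW : ∀ j v w, LVW.nab j (v ⊗ₜ[A] w) = LV.nab j v ⊗ₜ[A] w + v ⊗ₜ[A] LW.nab j w)
    (v : V × V) (w : W × W) (a : A × A) :
    qpair LV LW v (ract LW w a) = ract LVW (qpair LV LW v w) a := by
  simp only [qpair_eq, ract_eq, bracket_tmul hLVW, tmulBracket_smul_right,
    TensorProduct.tmul_smul, TensorProduct.tmul_add, TensorProduct.tmul_sub, smul_add]
  congr 1
  abel

theorem assoc_tmulBracket {LVW : LeibMod D (V ⊗[A] W)} {LWZ : LeibMod D (W ⊗[A] Z)}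
    (hLVW : ∀ j v w, LVW.nab j (v ⊗ₜ[A] w) = LV.nab j v ⊗ₜ[A] w + v ⊗ₜ[A] LW.nab j w)
    (hLWZ : ∀ j w z, LWZ.nab j (w ⊗ₜ[A] z) = LW.nab j w ⊗ₜ[A] z + w ⊗ₜ[A] LZ.nab j z)
    (v : V) (w : W) (z : Z) :
    TensorProduct.assoc A V W Z (tmulBracket LVW LZ (v ⊗ₜ[A] w) z + tmulBracket LV LW v w ⊗ₜ[A] z)
      = tmulBracket LV LWZ v (w ⊗ₜ[A] z) + v ⊗ₜ[A] tmulBracket LW LZ w z := by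
  simp only [tmulBracket, hLVW, hLWZ, TensorProduct.tmul_add, TensorProduct.add_tmul,
    TensorProduct.sum_tmul, TensorProduct.tmul_sum, TensorProduct.tmul_smul,
    ← TensorProduct.smul_tmul', map_add, map_sum, map_smul, TensorProduct.assoc_tmul, smul_add,
    Finset.sum_add_distrib]
  abel

theorem assoc_qpair_qpair {LVW : LeibMod D (V ⊗[A] W)} {LWZ : LeibMod D (W ⊗[A] Z)}
    (hLVW : ∀ j v w, LVW.nab j (v ⊗ₜ[A] w) = LV.nab j v ⊗ₜ[A] w + v ⊗ₜ[A] LW.nab j w)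
    (hLWZ : ∀ j w z, LWZ.nab j (w ⊗ₜ[A] z) = LW.nab j w ⊗ₜ[A] z + w ⊗ₜ[A] LZ.nab j z)
    (v : V × V) (w : W × W) (z : Z × Z) :
    Prod.map (TensorProduct.assoc A V W Z) (TensorProduct.assoc A V W Z)
      (qpair LVW LZ (qpair LV LW v w) z) = qpair LV LWZ v (qpair LW LZ w z) := by
  have hcorr := assoc_tmulBracket hLVW hLWZ v.1 w.1 z.1
  simp only [qpair_eq, Prod.map, TensorProduct.add_tmul, TensorProduct.tmul_add, map_add,
    TensorProduct.assoc_tmul, Prod.mk.injEq, true_and]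
  rw [map_add] at hcorr
  linear_combination (norm := abel) hcorr

end Bracket

/-- `q_{V,W}` is `A₁`-balanced (hence induces a well-defined map
`V₁ ⊗_{A₁} W₁ → (V ⊗_A W)₁`), it is an `A₁`-bimodule map for the tensor-product Leibniz
operators `∇_{V,j} ⊗ id + id ⊗ ∇_{W,j}`, and the coherence identity
`q_{V⊗W,Z} ∘ (q_{V,W} ⊗ id) = q_{V,W⊗Z} ∘ (id ⊗ q_{W,Z})` holds. -/
theorem statement_4 (D : DefData K A n)
    {V W Z : Type} [AddCommGroup V] [Module A V] [AddCommGroup W] [Module A W]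
    [AddCommGroup Z] [Module A Z]
    (LV : LeibMod D V) (LW : LeibMod D W) (LZ : LeibMod D Z)
    (LVW : LeibMod D (V ⊗[A] W))
    (hLVW : ∀ (j : Fin n) (v : V) (w : W),
      LVW.nab j (v ⊗ₜ[A] w) = LV.nab j v ⊗ₜ[A] w + v ⊗ₜ[A] LW.nab j w)
    (LWZ : LeibMod D (W ⊗[A] Z))
    (hLWZ : ∀ (j : Fin n) (w : W) (z : Z),
      LWZ.nab j (w ⊗ₜ[A] z) = LW.nab j w ⊗ₜ[A] z + w ⊗ₜ[A] LZ.nab j z) :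
    (∀ (a : A × A) (v : V × V) (w : W × W),
        qpair LV LW (ract LV v a) w = qpair LV LW v (lact LW a w)) ∧
    (∀ (a : A × A) (v : V × V) (w : W × W),
        qpair LV LW (lact LV a v) w = lact LVW a (qpair LV LW v w)) ∧
    (∀ (v : V × V) (w : W × W) (a : A × A),
        qpair LV LW v (ract LW w a) = ract LVW (qpair LV LW v w) a) ∧
    (∀ (v : V × V) (w : W × W) (z : Z × Z),
        (TensorProduct.assoc A V W Z) ((qpair LVW LZ (qpair LV LW v w) z).1)
            = (qpair LV LWZ v (qpair LW LZ w z)).1 ∧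
        (TensorProduct.assoc A V W Z) ((qpair LVW LZ (qpair LV LW v w) z).2)
            = (qpair LV LWZ v (qpair LW LZ w z)).2) :=
  ⟨qpair_ract_eq_qpair_lact LV LW, qpair_lact hLVW, qpair_ract hLVW,
    fun v w z => Prod.ext_iff.mp (assoc_qpair_qpair hLVW hLWZ v w z)⟩

end Stmt4
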